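/- Fix an integer ℓ ≥ 2, set n = ℓ + 1 and h = n, with all indices in ℤ/nℤ. Let a_{ij} = 2 if i = j, a_{ij} = −1 if i − j ≡ ±1 (mod n), and a_{ij} = 0 otherwise; let b_{ij} = 1 if j ≡ i − 1, b_{ij} = −1 if j ≡ i + 1, and b_{ij} = 0 otherwise. For a field K and data φ, χ : ℤ/nℤ → K with φ_j ≠ 0, define R_j(φ, χ) = (φ̃, χ̃) by φ̃_i = φ_i + h·b_{ij}·χ_j/φ_j and χ̃_i = χ_i − a_{ij}·χ_j for all i. Fix j ∈ ℤ/nℤ and suppose that every division performed in the successive applications below has a nonzero denominator (namely: φ_j ≠ 0 and φ_{j+1} ≠ 0; after applying R_j, the (j+1)-component of the resulting φ is nonzero; after applying R_{j+1}, the j-component of the resulting φ is nonzero; and the corresponding conditions for the other composition). Then R_j ∘ R_{j+1} ∘ R_j (φ, χ) = R_{j+1} ∘ R_j ∘ R_{j+1} (φ, χ), componentwise in both φ and χ. -/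

import Mathlib

/-!
Only the data at `j` and `j + 1` enter the denominators, and each `R` shifts `φ_i` by
`n b_{i·} ξ` and `χ_i` linearly. Both composites therefore act on `φ_i` as
`φ_i + n (b_{ij} s + b_{i,j+1} t)`, where `s` and `t` are the total `ξ_j` and `ξ_{j+1}` picked up
along the way, and on `χ` by the same linear map (the Weyl group relation for the reflections).
So it suffices that the totals `s` and `t` agree for the two composites, which is a rational
identity in `φ_j, φ_{j+1}, χ_j, χ_{j+1}`; the identity for `t` is the one for `s` with `j` and
`j + 1` swapped and `n` replaced by `-n`.
-/

/-- The Cartan matrix of affine type `A_ℓ^{(1)}` (indices in `ℤ/nℤ`, `n = ℓ+1`):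
`a_{ij} = 2` if `i = j`, `−1` if `i − j ≡ ±1`, and `0` otherwise. -/
def cartanA (K : Type*) [Field K] {n : ℕ} (i j : ZMod n) : K :=
  if i = j then 2 else if i - j = 1 ∨ i - j = -1 then -1 else 0

/-- The orientation data: `b_{ij} = 1` if `j = i − 1`, `−1` if `j = i + 1`, `0` else. -/
def orientB (K : Type*) [Field K] {n : ℕ} (i j : ZMod n) : K :=
  if j = i - 1 then 1 else if j = i + 1 then -1 else 0

/-- The Bäcklund transformation `R_j` of type `A_ℓ^{(1)}` acting on data `(φ, χ)`:
`R_j(φ)_i = φ_i + n·b_{ij}·χ_j/φ_j` and `R_j(χ)_i = χ_i − a_{ij}·χ_j` (here `h = n`). -/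
def backlundR (K : Type*) [Field K] {n : ℕ} (j : ZMod n)
    (p : (ZMod n → K) × (ZMod n → K)) : (ZMod n → K) × (ZMod n → K) :=
  (fun i => p.1 i + (n : K) * orientB K i j * (p.2 j / p.1 j),
   fun i => p.2 i - cartanA K i j * p.2 j)

theorem ZMod.natCast_ne_zero_of_pos_of_lt {n k : ℕ} (hk : 0 < k) (hkn : k < n) :
    (k : ZMod n) ≠ 0 := by
  rw [Ne, ZMod.natCast_eq_zero_iff]
  exact fun h => absurd (Nat.le_of_dvd hk h) (by omega)

section Coefficients

variable (K : Type*) [Field K] {n : ℕ}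

theorem cartanA_self (i : ZMod n) : cartanA K i i = 2 := if_pos rfl

theorem cartanA_succ_left (h : (1 : ZMod n) ≠ 0) (j : ZMod n) : cartanA K (j + 1) j = -1 := by
  rw [cartanA, if_neg (by simpa using h), if_pos (Or.inl (by ring))]

theorem cartanA_succ_right (h : (1 : ZMod n) ≠ 0) (j : ZMod n) : cartanA K j (j + 1) = -1 := by
  rw [cartanA, if_neg (by simpa using h), if_pos (Or.inr (by ring))]

theorem orientB_self (h : (1 : ZMod n) ≠ 0) (i : ZMod n) : orientB K i i = 0 := by
  rw [orientB, if_neg (by simpa [eq_sub_iff_add_eq] using h), if_neg (by simpa using h)]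

theorem orientB_succ_left (j : ZMod n) : orientB K (j + 1) j = 1 := by
  rw [orientB, if_pos (add_sub_cancel_right j 1).symm]

theorem orientB_succ_right (h : (2 : ZMod n) ≠ 0) (j : ZMod n) : orientB K j (j + 1) = -1 := by
  rw [orientB, if_neg (by rw [eq_sub_iff_add_eq, add_assoc, one_add_one_eq_two]; simpa using h),
    if_pos rfl]

end Coefficients

/-- With `A = φ_j`, `B = φ_{j+1}`, `X = χ_j`, `Y = χ_{j+1}`, `N = n`: the two values of `ξ_j` used
by `R_j R_{j+1} R_j` add up to the single one used by `R_{j+1} R_j R_{j+1}`. -/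
theorem braid_xi_add {K : Type*} [Field K] {N A B X Y : K} (hA : A ≠ 0) (hB : B ≠ 0)
    (hP : B + N * (X / A) ≠ 0) (hQ : A - N * (Y / B) ≠ 0) :
    X / A + Y / (A - N * ((X + Y) / (B + N * (X / A)))) = (X + Y) / (A - N * (Y / B)) := by
  have hP' : A * B + N * X ≠ 0 := by
    contrapose! hP; field_simp; linear_combination hP
  have hQ' : A * B - N * Y ≠ 0 := by
    contrapose! hQ; field_simp; linear_combination hQ
  have hR : A - N * ((X + Y) / (B + N * (X / A))) = A * (A * B - N * Y) / (A * B + N * X) := by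
    field_simp; ring
  have hS : A - N * (Y / B) = (A * B - N * Y) / B := by
    field_simp
  rw [hR, hS, div_div_eq_mul_div, div_div_eq_mul_div, div_add_div _ _ hA (mul_ne_zero hA hQ'),
    div_eq_div_iff (mul_ne_zero hA (mul_ne_zero hA hQ')) hQ']
  ring

theorem stmt_16 (ℓ : ℕ) (hℓ : 2 ≤ ℓ) (K : Type*) [Field K]
    (p : (ZMod (ℓ + 1) → K) × (ZMod (ℓ + 1) → K)) (j : ZMod (ℓ + 1))
    (h1 : p.1 j ≠ 0) (h2 : p.1 (j + 1) ≠ 0)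
    (h3 : (backlundR K j p).1 (j + 1) ≠ 0)
    (h5 : (backlundR K (j + 1) p).1 j ≠ 0) :
    backlundR K j (backlundR K (j + 1) (backlundR K j p))
      = backlundR K (j + 1) (backlundR K j (backlundR K (j + 1) p)) := by
  have one_ne : (1 : ZMod (ℓ + 1)) ≠ 0 := by
    exact_mod_cast ZMod.natCast_ne_zero_of_pos_of_lt (n := ℓ + 1) one_pos (by omega)
  have two_ne : (2 : ZMod (ℓ + 1)) ≠ 0 := by
    exact_mod_cast ZMod.natCast_ne_zero_of_pos_of_lt (n := ℓ + 1) two_pos (by omega)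
  simp only [backlundR, cartanA_self, cartanA_succ_left K one_ne, cartanA_succ_right K one_ne,
    orientB_self K one_ne, orientB_succ_left, orientB_succ_right K two_ne,
    mul_zero, zero_mul, add_zero, mul_one, mul_neg, neg_mul, ← sub_eq_add_neg] at h3 h5 ⊢
  set N : K := ((ℓ + 1 : ℕ) : K)
  ext i
  · have h3' : p.1 (j + 1) - -N * (p.2 j / p.1 j) ≠ 0 := by rwa [neg_mul, sub_neg_eq_add]
    have h5' : p.1 j + -N * (p.2 (j + 1) / p.1 (j + 1)) ≠ 0 := by
      rwa [neg_mul, ← sub_eq_add_neg]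
    linear_combination (N * orientB K i j) * braid_xi_add h1 h2 h3 h5
      - (N * orientB K i (j + 1)) * braid_xi_add h2 h1 h5' h3'
  · ring
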